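/- arXiv:2203.00609 — 3 statements merged into one kernel-verified Lean document; each statement's English description precedes it below -/
import Mathlib

section
/- For positive rates β, γ, ε, θ, ψ with β > γ and α ∈ [0,1], if k₀ := -(β - γ)(γ + ψ + θ) + β(ψ + θ)α is positive, then k₁ := ε(2γ + ψ + θ) + γ(2(γ + ψ) + θ) - β(ε + γ + ψ - ψα) is also positive. -/
/-!
`k₁` exceeds `k₀` by `ε (2γ + ψ + θ - β) + γ (γ + ψ) + β θ (1 - α)`. Writing
`k₀ = γ (γ + ψ + θ - β) - β (ψ + θ) (1 - α)` shows that `k₀ > 0` forces `β < γ + ψ + θ`,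
which makes every term of that excess nonnegative (and `γ (γ + ψ)` positive).
-/

namespace SEIRTracing

def k0 (β γ θ ψ α : ℝ) : ℝ := -(β - γ) * (γ + ψ + θ) + β * (ψ + θ) * α

def k1 (β γ ε θ ψ α : ℝ) : ℝ :=
  ε * (2 * γ + ψ + θ) + γ * (2 * (γ + ψ) + θ) - β * (ε + γ + ψ - ψ * α)

variable (β γ ε θ ψ α : ℝ)

theorem k0_eq : k0 β γ θ ψ α = γ * (γ + ψ + θ - β) - β * (ψ + θ) * (1 - α) := by
  unfold k0; ring

theorem k1_eq_k0_add : k1 β γ ε θ ψ α =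
    k0 β γ θ ψ α + ε * (2 * γ + ψ + θ - β) + γ * (γ + ψ) + β * θ * (1 - α) := by
  unfold k0 k1; ring

variable {β γ θ ψ α}

theorem lt_add_of_k0_pos (hβ : 0 ≤ β) (hγ : 0 < γ) (hψθ : 0 ≤ ψ + θ) (hα : α ≤ 1)
    (hk0 : 0 < k0 β γ θ ψ α) : β < γ + ψ + θ := by
  have hslack : 0 ≤ β * (ψ + θ) * (1 - α) := by
    have := sub_nonneg.2 hα
    positivity
  have : 0 < γ * (γ + ψ + θ - β) := by linarith [k0_eq β γ θ ψ α]
  linarith [pos_of_mul_pos_right this hγ.le]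

end SEIRTracing

open SEIRTracing in
theorem k0_pos_imp_k1_pos_general (β γ ε θ ψ α : ℝ)
    (hβ : 0 < β) (hγ : 0 < γ) (hε : 0 < ε) (hθ : 0 < θ) (hψ : 0 < ψ)
    (hα : α ∈ Set.Icc (0:ℝ) 1)
    (hk0 : 0 < -(β - γ) * (γ + ψ + θ) + β * (ψ + θ) * α) :
    0 < ε * (2 * γ + ψ + θ) + γ * (2 * (γ + ψ) + θ) - β * (ε + γ + ψ - ψ * α) := by
  change 0 < k0 β γ θ ψ α at hk0
  change 0 < k1 β γ ε θ ψ α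
  have hβ_lt : β < γ + ψ + θ := lt_add_of_k0_pos hβ.le hγ (by positivity) hα.2 hk0
  have hε_term : 0 ≤ ε * (2 * γ + ψ + θ - β) := mul_nonneg hε.le (by linarith)
  have hγ_term : 0 < γ * (γ + ψ) := by positivity
  have hθ_term : 0 ≤ β * θ * (1 - α) := mul_nonneg (by positivity) (sub_nonneg.2 hα.2)
  linarith [k1_eq_k0_add β γ ε θ ψ α]

theorem k0_pos_imp_k1_pos (β γ ε θ ψ α : ℝ)
    (hβ : 0 < β) (hγ : 0 < γ) (hε : 0 < ε) (hθ : 0 < θ) (hψ : 0 < ψ)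
    (hβγ : γ < β) (hα : α ∈ Set.Icc (0:ℝ) 1)
    (hk0 : 0 < -(β - γ) * (γ + ψ + θ) + β * (ψ + θ) * α) :
    0 < ε * (2 * γ + ψ + θ) + γ * (2 * (γ + ψ) + θ) - β * (ε + γ + ψ - ψ * α) :=
  k0_pos_imp_k1_pos_general β γ ε θ ψ α hβ hγ hε hθ hψ hα hk0
end

section
/- For positive rates β, γ, ε, θ, ψ and α ∈ [0,1], if k₁ := ε(2γ + ψ + θ) + γ(2(γ + ψ) + θ) - β(ε + γ + ψ - ψα) is positive, then k₂ := -βε + ε² + γ(γ + ψ) + ε(4γ + 2ψ + θ) is also positive. -/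
/-!
Since `ψ (1 - α) ≥ 0`, the condition `k₁ > 0` bounds `β`, and multiplying `k₂` by `ε + γ` makes
this quantitative: `(ε + γ) k₂ = ε k₁ + βεψ(1 - α) + r` with a remainder `r` that is a polynomial with
positive coefficients in `ε, γ, ψ` (the `θ`-terms cancel). Hence `k₂ > 0`.
-/

namespace SEIRContactTracing

variable {R : Type*} [CommRing R]

def k₁ (β γ ε θ ψ α : R) : R :=
  ε * (2 * γ + ψ + θ) + γ * (2 * (γ + ψ) + θ) - β * (ε + γ + ψ - ψ * α)

def k₂ (β γ ε θ ψ : R) : R :=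
  -β * ε + ε ^ 2 + γ * (γ + ψ) + ε * (4 * γ + 2 * ψ + θ)

theorem add_mul_k₂_eq (β γ ε θ ψ α : R) :
    (ε + γ) * k₂ β γ ε θ ψ = ε * k₁ β γ ε θ ψ α + β * ε * ψ * (1 - α)
      + (ε ^ 3 + ε ^ 2 * (3 * γ + ψ) + ε * γ * (3 * γ + ψ) + γ ^ 2 * (γ + ψ)) := by
  unfold k₁ k₂
  ring

end SEIRContactTracing

open SEIRContactTracing in
theorem k1_pos_imp_k2_pos_general (β γ ε θ ψ α : ℝ)
    (hβ : 0 < β) (hγ : 0 < γ) (hε : 0 < ε) (hψ : 0 < ψ)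
    (hα : α ∈ Set.Icc (0:ℝ) 1)
    (hk1 : 0 < ε * (2 * γ + ψ + θ) + γ * (2 * (γ + ψ) + θ) - β * (ε + γ + ψ - ψ * α)) :
    0 < -β * ε + ε ^ 2 + γ * (γ + ψ) + ε * (4 * γ + 2 * ψ + θ) := by
  have hα' : 0 ≤ 1 - α := sub_nonneg.2 hα.2
  have hmul : 0 < (ε + γ) * k₂ β γ ε θ ψ := by
    rw [add_mul_k₂_eq β γ ε θ ψ α]
    have : 0 < ε * k₁ β γ ε θ ψ α := mul_pos hε hk1
    positivity
  exact pos_of_mul_pos_right hmul (by positivity)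

theorem k1_pos_imp_k2_pos (β γ ε θ ψ α : ℝ)
    (hβ : 0 < β) (hγ : 0 < γ) (hε : 0 < ε) (hθ : 0 < θ) (hψ : 0 < ψ)
    (hα : α ∈ Set.Icc (0:ℝ) 1)
    (hk1 : 0 < ε * (2 * γ + ψ + θ) + γ * (2 * (γ + ψ) + θ) - β * (ε + γ + ψ - ψ * α)) :
    0 < -β * ε + ε ^ 2 + γ * (γ + ψ) + ε * (4 * γ + 2 * ψ + θ) :=
  k1_pos_imp_k2_pos_general β γ ε θ ψ α hβ hγ hε hψ hα hk1
end

section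
/- Fix γ, ε, α, and tracing parameters so that θ = p_E·α·β and ψ = p_I·α·β with fixed probabilities p_E, p_I ∈ (0,1], p_E + p_I ≤ 1, and α ∈ (0,1). Then the controllability condition α - (1 + γ/(αβ(p_E+p_I)))·(1 - γ/β) > 0 fails for all sufficiently large β; i.e., there exists B such that for all β > B the condition is false. -/
open Filter Topology

/- As β → ∞ both γ / β and γ / (α β (p_E + p_I)) vanish, so the controllability margin tends to
α - 1 < 0 and is therefore eventually negative. -/

theorem tendsto_sub_one_add_div_mul_one_sub_div (a c γ : ℝ) :
    Tendsto (fun β : ℝ => a - (1 + c / β) * (1 - γ / β)) atTop (𝓝 (a - 1)) := by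
  have hdiv (d : ℝ) : Tendsto (fun β : ℝ => d / β) atTop (𝓝 0) :=
    tendsto_const_nhds.div_atTop tendsto_id
  simpa using ((hdiv c).const_add 1).mul ((hdiv γ).const_sub 1) |>.const_sub a

theorem high_transmissibility_uncontrollable_general (γ α pE pI : ℝ)
    (hα : α ∈ Set.Ioo (0:ℝ) 1) :
    ∃ B : ℝ, ∀ β : ℝ, B < β →
      ¬ (0 < α - (1 + γ / (α * β * (pE + pI))) * (1 - γ / β)) := by
  have hmargin : Tendsto (fun β : ℝ => α - (1 + γ / (α * β * (pE + pI))) * (1 - γ / β))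
      atTop (𝓝 (α - 1)) := by
    convert tendsto_sub_one_add_div_mul_one_sub_div α (γ / (α * (pE + pI))) γ using 4
    rw [div_div, mul_right_comm]
  have hlimit_neg : α - 1 < 0 := by linarith [hα.2]
  obtain ⟨B, hB⟩ := eventually_atTop.1 (hmargin.eventually (gt_mem_nhds hlimit_neg))
  exact ⟨B, fun β hβ => (hB β hβ.le).not_gt⟩

theorem high_transmissibility_uncontrollable (γ α pE pI : ℝ)
    (hγ : 0 < γ) (hα : α ∈ Set.Ioo (0:ℝ) 1)
    (hpE : pE ∈ Set.Ioc (0:ℝ) 1) (hpI : pI ∈ Set.Ioc (0:ℝ) 1)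
    (hsum : pE + pI ≤ 1) :
    ∃ B : ℝ, ∀ β : ℝ, B < β →
      ¬ (0 < α - (1 + γ / (α * β * (pE + pI))) * (1 - γ / β)) :=
  high_transmissibility_uncontrollable_general γ α pE pI hα
end
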